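/- arXiv:1002.4731 — 4 statements merged into one kernel-verified Lean document; each statement's English description precedes it below -/
import Mathlib

section
/- The function f(z) = 1/sqrt(1 + (-i*τ₀*z)^(γ-1)), with τ₀ > 0 and γ ∈ (1,2], maps the open first quadrant {z : Re(z) > 0, Im(z) > 0} into itself, where powers and square roots are principal branches on the slit plane ℂ \ (-∞, 0]. -/
/-!
Multiplication by `-i τ₀` maps the first quadrant onto the fourth one, `{w | arg w ∈ (-π/2, 0)}`.
The principal power `w ↦ w ^ r` with `0 < r ≤ 1` multiplies the argument by `r`, so it keeps
the fourth quadrant, and so does `w ↦ 1 + w`. Hence `1 + (-i τ₀ z) ^ (γ - 1)` and its square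
root lie in the fourth quadrant, and inversion maps the fourth quadrant onto the first.
-/

open Complex

lemma re_pos_and_im_neg_iff_arg_mem {w : ℂ} :
    0 < w.re ∧ w.im < 0 ↔ arg w ∈ Set.Ioo (-(Real.pi / 2)) 0 := by
  simp only [Set.mem_Ioo, neg_pi_div_two_lt_arg_iff, arg_neg_iff]
  constructor
  · rintro ⟨hre, him⟩
    exact ⟨Or.inl hre, him⟩
  · rintro ⟨hre | him', him⟩
    · exact ⟨hre, him⟩
    · exact absurd him (not_lt.2 him')

lemma arg_cpow_ofReal {w : ℂ} (hw : w ≠ 0) {r : ℝ}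
    (h : r * arg w ∈ Set.Ioc (-Real.pi) Real.pi) :
    arg (w ^ (r : ℂ)) = r * arg w := by
  have him : (log w * r).im = r * arg w := by simp [log_im, mul_comm]
  rw [cpow_def_of_ne_zero hw, arg_exp, him, toIocMod_eq_self]
  rwa [show -Real.pi + 2 * Real.pi = Real.pi by ring]

lemma cpow_ofReal_re_pos_and_im_neg {w : ℂ} (hw : 0 < w.re ∧ w.im < 0) {r : ℝ}
    (hr₀ : 0 < r) (hr₁ : r ≤ 1) : 0 < (w ^ (r : ℂ)).re ∧ (w ^ (r : ℂ)).im < 0 := by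
  obtain ⟨harg₁, harg₂⟩ := re_pos_and_im_neg_iff_arg_mem.1 hw
  have hw₀ : w ≠ 0 := fun h ↦ by simp [h] at hw
  have hr_arg : -(Real.pi / 2) < r * arg w := by nlinarith
  have hr_arg' : r * arg w < 0 := mul_neg_of_pos_of_neg hr₀ harg₂
  have hr_arg_mem : r * arg w ∈ Set.Ioc (-Real.pi) Real.pi :=
    ⟨by linarith [Real.pi_pos], by linarith [Real.pi_pos]⟩
  rw [re_pos_and_im_neg_iff_arg_mem, arg_cpow_ofReal hw₀ hr_arg_mem]
  exact ⟨hr_arg, hr_arg'⟩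

lemma inv_re_pos_and_im_pos {w : ℂ} (hw : 0 < w.re ∧ w.im < 0) :
    0 < (w⁻¹).re ∧ 0 < (w⁻¹).im := by
  have hw₀ : 0 < normSq w := normSq_pos.2 fun h ↦ by simp [h] at hw
  rw [inv_re, inv_im]
  exact ⟨div_pos hw.1 hw₀, div_pos (neg_pos.2 hw.2) hw₀⟩

/-- The function `f(z) = 1/√(1 + (-i τ₀ z)^(γ-1))` (principal branches) maps the
open first quadrant into itself. -/
theorem stmt_0 (τ₀ γ : ℝ) (hτ : 0 < τ₀) (hγ : 1 < γ ∧ γ ≤ 2)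
    (f : ℂ → ℂ)
    (hf : ∀ z : ℂ, f z = 1 / (1 + (-Complex.I * (τ₀ : ℂ) * z) ^ ((γ : ℂ) - 1)) ^ ((1 : ℂ) / 2))
    (z : ℂ) (hre : 0 < z.re) (him : 0 < z.im) :
    0 < (f z).re ∧ 0 < (f z).im := by
  have hu : 0 < (-I * τ₀ * z).re ∧ (-I * τ₀ * z).im < 0 := by
    simp only [neg_mul, neg_re, neg_im, mul_re, mul_im, I_re, I_im, ofReal_re, ofReal_im]
    constructor <;> nlinarith
  obtain ⟨hp_re, hp_im⟩ :=
    cpow_ofReal_re_pos_and_im_neg hu (r := γ - 1) (by linarith) (by linarith)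
  rw [hf, one_div (_ ^ _), show (γ : ℂ) - 1 = ((γ - 1 : ℝ) : ℂ) by push_cast; ring,
    show (1 : ℂ) / 2 = ((1 / 2 : ℝ) : ℂ) by push_cast; ring]
  refine inv_re_pos_and_im_pos
    (cpow_ofReal_re_pos_and_im_neg ⟨?_, ?_⟩ (by norm_num) (by norm_num))
  · rw [add_re, one_re]
    linarith
  · rwa [add_im, one_im, zero_add]
end

section
/- The function f(z) = 1/sqrt(1 + (-i*τ₀*z)^(γ-1)), with τ₀ > 0 and γ ∈ (1,2], maps the second quadrant {z : Re(z) < 0, Im(z) > 0} into the fourth quadrant {w : Re(w) > 0, Im(w) < 0}. -/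
open Complex

/-!
A point of the open first quadrant has argument in `(0, π/2)`, and a real power `w ^ r` with
`0 < r ≤ 1` multiplies the argument by `r`, so it stays in the open first quadrant. Thus
`-i τ₀ z`, `(-i τ₀ z) ^ (γ - 1)`, `1 + (-i τ₀ z) ^ (γ - 1)` and its square root all lie in the
open first quadrant, and inversion, which conjugates and rescales, sends it to the fourth.
-/

namespace Complex

lemma arg_mem_Ioo_of_re_pos_of_im_pos {w : ℂ} (hre : 0 < w.re) (him : 0 < w.im) :
    w.arg ∈ Set.Ioo 0 (Real.pi / 2) := by
  refine ⟨lt_of_le_of_ne (arg_nonneg_iff.2 him.le) fun h => ?_,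
    arg_lt_pi_div_two_iff.2 (Or.inl hre)⟩
  exact him.ne' (arg_eq_zero_iff.1 h.symm).2

lemma cpow_ofReal_re_pos_im_pos {w : ℂ} (hre : 0 < w.re) (him : 0 < w.im) {r : ℝ}
    (hr₀ : 0 < r) (hr₁ : r ≤ 1) :
    0 < (w ^ (r : ℂ)).re ∧ 0 < (w ^ (r : ℂ)).im := by
  obtain ⟨harg₀, harg₁⟩ := arg_mem_Ioo_of_re_pos_of_im_pos hre him
  have hnorm : 0 < ‖w‖ ^ r := Real.rpow_pos_of_pos (norm_pos_iff.2 fun h => by simp [h] at hre) r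
  have hpos : 0 < w.arg * r := mul_pos harg₀ hr₀
  have hlt : w.arg * r < Real.pi / 2 := by nlinarith
  rw [cpow_ofReal_re, cpow_ofReal_im]
  exact ⟨mul_pos hnorm (Real.cos_pos_of_mem_Ioo ⟨by linarith [Real.pi_pos], hlt⟩),
    mul_pos hnorm (Real.sin_pos_of_pos_of_lt_pi hpos (by linarith [Real.pi_pos]))⟩

lemma inv_re_pos_im_neg {w : ℂ} (hre : 0 < w.re) (him : 0 < w.im) :
    0 < w⁻¹.re ∧ w⁻¹.im < 0 := by
  have hnormSq : 0 < normSq w := normSq_pos.2 fun h => by simp [h] at hre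
  rw [inv_re, inv_im]
  exact ⟨div_pos hre hnormSq, div_neg_of_neg_of_pos (neg_neg_of_pos him) hnormSq⟩

lemma neg_I_mul_ofReal_mul_re_pos_im_pos {τ : ℝ} (hτ : 0 < τ) {z : ℂ} (hre : z.re < 0)
    (him : 0 < z.im) :
    0 < (-I * τ * z).re ∧ 0 < (-I * τ * z).im := by
  simp only [mul_re, mul_im, neg_re, neg_im, I_re, I_im, ofReal_re, ofReal_im]
  constructor <;> nlinarith

end Complex

/-- `f(z) = 1/√(1 + (-i τ₀ z)^(γ-1))` maps the open second quadrant into the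
open fourth quadrant. -/
theorem stmt_2 (τ₀ γ : ℝ) (hτ : 0 < τ₀) (hγ : 1 < γ ∧ γ ≤ 2)
    (f : ℂ → ℂ)
    (hf : ∀ z : ℂ, f z = 1 / (1 + (-Complex.I * (τ₀ : ℂ) * z) ^ ((γ : ℂ) - 1)) ^ ((1 : ℂ) / 2))
    (z : ℂ) (hre : z.re < 0) (him : 0 < z.im) :
    0 < (f z).re ∧ (f z).im < 0 := by
  obtain ⟨hw_re, hw_im⟩ := neg_I_mul_ofReal_mul_re_pos_im_pos hτ hre him
  obtain ⟨hp_re, hp_im⟩ := cpow_ofReal_re_pos_im_pos hw_re hw_im (r := γ - 1)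
    (by linarith [hγ.1]) (by linarith [hγ.2])
  have hu_re : 0 < (1 + (-I * τ₀ * z) ^ ((γ - 1 : ℝ) : ℂ)).re := by
    rw [add_re, one_re]; linarith
  have hu_im : 0 < (1 + (-I * τ₀ * z) ^ ((γ - 1 : ℝ) : ℂ)).im := by
    rwa [add_im, one_im, zero_add]
  obtain ⟨hs_re, hs_im⟩ := cpow_ofReal_re_pos_im_pos hu_re hu_im (r := 1 / 2)
    (by norm_num) (by norm_num)
  rw [hf z, one_div]
  push_cast at hs_re hs_im
  exact inv_re_pos_im_neg hs_re hs_im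
end

section
/- Let α₀, c₀, τ₀ > 0 and γ ∈ (1,2]. Define α_*(z) = α₀·(-i·z)/(c₀·sqrt(1 + (-i·τ₀·z)^(γ-1))) using principal branches. Then Re(α_*(z)) ≥ 0 for every z in the closed upper half plane with z ≠ 0 where α_* is defined; in particular Re(α_*(ω)) ≥ 0 for all real ω ≠ 0. -/
/-!
Put `w = -i z`, which lies in the closed right half plane. A real power `x ^ r` with `0 ≤ r ≤ 1`
has argument `r · arg x`, so it maps the closed right half plane into itself and, there, preserves
the sign of the imaginary part. Hence `s = √(1 + (τ₀ w)^(γ-1))` lies in the closed right half plane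
with `Im s` of the same sign as `Im w`, and `Re (w / s) = (Re w Re s + Im w Im s) / |s|² ≥ 0`.
-/

open Complex

namespace Complex

variable {x : ℂ} {r : ℝ}

lemma arg_cpow_ofReal (hx : x ≠ 0) (hr₀ : 0 ≤ r) (hr₁ : r ≤ 1) :
    arg (x ^ (r : ℂ)) = arg x * r := by
  have hπ := Real.pi_pos
  have h₁ := neg_pi_lt_arg x
  have h₂ := arg_le_pi x
  rw [cpow_ofReal, ofReal_cos, ofReal_sin,
    arg_mul_cos_add_sin_mul_I (Real.rpow_pos_of_pos (norm_pos_iff.2 hx) r)]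
  constructor <;> nlinarith

lemma sign_im_eq_sign_arg (hx : 0 ≤ x.re) : SignType.sign x.im = SignType.sign (arg x) := by
  rcases lt_trichotomy x.im 0 with h | h | h
  · rw [sign_neg h, sign_neg (arg_neg_iff.2 h)]
  · rw [h, arg_eq_zero_iff.2 ⟨hx, h⟩]
  · have harg : arg x ≠ 0 := fun h0 => h.ne' (arg_eq_zero_iff.1 h0).2
    rw [sign_pos h, sign_pos ((arg_nonneg_iff.2 h.le).lt_of_ne' harg)]

lemma re_cpow_ofReal_nonneg (hx : 0 ≤ x.re) (hr₀ : 0 ≤ r) (hr₁ : r ≤ 1) :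
    0 ≤ (x ^ (r : ℂ)).re := by
  rcases eq_or_ne x 0 with rfl | hx₀
  · rw [← ofReal_zero, ← ofReal_cpow le_rfl, ofReal_re]
    exact Real.rpow_nonneg le_rfl r
  rw [← abs_arg_le_pi_div_two_iff, arg_cpow_ofReal hx₀ hr₀ hr₁, abs_mul, abs_of_nonneg hr₀]
  exact mul_le_of_le_one_right (abs_nonneg _) hr₁ |>.trans (abs_arg_le_pi_div_two_iff.2 hx)

lemma sign_im_cpow_ofReal (hx : 0 ≤ x.re) (hr₀ : 0 < r) (hr₁ : r ≤ 1) :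
    SignType.sign (x ^ (r : ℂ)).im = SignType.sign x.im := by
  rcases eq_or_ne x 0 with rfl | hx₀
  · rw [zero_cpow (ofReal_ne_zero.2 hr₀.ne')]
  rw [sign_im_eq_sign_arg hx, sign_im_eq_sign_arg (re_cpow_ofReal_nonneg hx hr₀.le hr₁),
    arg_cpow_ofReal hx₀ hr₀.le hr₁, sign_mul, sign_pos hr₀, mul_one]

lemma re_div_nonneg {w s : ℂ} (hw : 0 ≤ w.re) (hs : 0 ≤ s.re)
    (him : SignType.sign w.im = SignType.sign s.im) : 0 ≤ (w / s).re := by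
  have him' : 0 ≤ w.im * s.im := by
    rw [← sign_nonneg_iff, sign_mul, him]
    rcases SignType.sign s.im with _ | _ | _ <;> decide
  rw [div_re]
  exact add_nonneg (div_nonneg (mul_nonneg hw hs) (normSq_nonneg s))
    (div_nonneg him' (normSq_nonneg s))

end Complex

/-- For the causal attenuation law `α⋆(z) = α₀ (-i z) / (c₀ √(1 + (-i τ₀ z)^(γ-1)))`,
the real part of `α⋆` is nonnegative on the closed upper half plane (away from 0);
in particular on the real axis. -/
theorem stmt_3 (α₀ c₀ τ₀ γ : ℝ) (hα : 0 < α₀) (hc : 0 < c₀) (hτ : 0 < τ₀)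
    (hγ : 1 < γ ∧ γ ≤ 2)
    (αstar : ℂ → ℂ)
    (hαstar : ∀ z : ℂ, αstar z =
      (α₀ : ℂ) * (-Complex.I * z) /
        ((c₀ : ℂ) * (1 + (-Complex.I * (τ₀ : ℂ) * z) ^ ((γ : ℂ) - 1)) ^ ((1 : ℂ) / 2))) :
    (∀ z : ℂ, 0 ≤ z.im → z ≠ 0 → 0 ≤ (αstar z).re) ∧
      (∀ ω : ℝ, ω ≠ 0 → 0 ≤ (αstar (ω : ℂ)).re) := by
  have hβ₀ : 0 < γ - 1 := by linarith [hγ.1]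
  have hβ₁ : γ - 1 ≤ 1 := by linarith [hγ.2]
  have key : ∀ z : ℂ, 0 ≤ z.im → 0 ≤ (αstar z).re := by
    intro z hz
    set w := -I * z
    set t := (τ₀ : ℂ) * w
    set v := 1 + t ^ ((γ - 1 : ℝ) : ℂ)
    have hw : 0 ≤ w.re := by simpa [w] using hz
    have ht : 0 ≤ t.re := by simpa [t] using mul_nonneg hτ.le hw
    have hv : 0 ≤ v.re := by
      simpa [v] using add_nonneg zero_le_one (re_cpow_ofReal_nonneg ht hβ₀.le hβ₁)
    have hαstar_eq : αstar z = ((α₀ / c₀ : ℝ) : ℂ) * (w / v ^ ((1 / 2 : ℝ) : ℂ)) := by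
      rw [hαstar z]
      simp only [w, v, t]
      push_cast
      ring_nf
    have him : SignType.sign w.im = SignType.sign (v ^ ((1 / 2 : ℝ) : ℂ)).im := by
      rw [sign_im_cpow_ofReal hv one_half_pos one_half_lt_one.le, add_im, one_im, zero_add,
        sign_im_cpow_ofReal ht hβ₀ hβ₁, im_ofReal_mul, sign_mul, sign_pos hτ, one_mul]
    rw [hαstar_eq, re_ofReal_mul]
    exact mul_nonneg (div_pos hα hc).le
      (re_div_nonneg hw (re_cpow_ofReal_nonneg hv one_half_pos.le one_half_lt_one.le) him)
  exact ⟨fun z hz _ => key z hz, fun ω _ => key ω (by simp)⟩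
end

section
/- Let g : ℂ → ℂ be defined on the closed upper half plane by g(z) = sqrt(1 + (-i·τ₀·z)^(γ-1)) / (α₀ + sqrt(1 + (-i·τ₀·z)^(γ-1))), with α₀, τ₀ > 0 and γ ∈ (1,2], using principal branches. Then the denominator satisfies Re(α₀ + sqrt(1 + (-i·τ₀·z)^(γ-1))) ≥ α₀ > 0 for all z in the closed upper half plane, so g is well defined (denominator nonzero) there and holomorphic on the open upper half plane. -/
open Complex

lemma cpow_re_nonneg_of_abs_arg_le {x : ℂ} {y : ℝ} (h : |arg x * y| ≤ Real.pi / 2) :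
    0 ≤ (x ^ (y : ℂ)).re := by
  rw [Complex.cpow_ofReal_re]
  refine mul_nonneg (Real.rpow_nonneg (norm_nonneg x) y) ?_
  exact Real.cos_nonneg_of_mem_Icc ⟨neg_le_of_abs_le h, le_of_abs_le h⟩

lemma inner_re_nonneg (τ₀ γ : ℝ) (hτ : 0 < τ₀) (hγ : 1 < γ ∧ γ ≤ 2)
    {z : ℂ} (hz : 0 ≤ z.im) :
    0 ≤ ((-Complex.I * (τ₀ : ℂ) * z) ^ ((γ : ℂ) - 1)).re := by
  have hcast : ((γ : ℂ) - 1) = ((γ - 1 : ℝ) : ℂ) := by push_cast; ring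
  rw [hcast]
  apply cpow_re_nonneg_of_abs_arg_le
  have hre : 0 ≤ (-Complex.I * (τ₀ : ℂ) * z).re := by
    simp only [Complex.mul_re, Complex.mul_im, Complex.neg_re, Complex.neg_im,
      Complex.I_re, Complex.I_im, Complex.ofReal_re, Complex.ofReal_im]
    nlinarith [hτ.le]
  have harg : |arg (-Complex.I * (τ₀ : ℂ) * z)| ≤ Real.pi / 2 :=
    Complex.abs_arg_le_pi_div_two_iff.mpr hre
  have h1 : 0 ≤ γ - 1 := by linarith [hγ.1]
  have h2 : γ - 1 ≤ 1 := by linarith [hγ.2]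
  rw [abs_mul, _root_.abs_of_nonneg h1]
  calc |arg (-Complex.I * (τ₀ : ℂ) * z)| * (γ - 1)
      ≤ (Real.pi / 2) * 1 := by
        apply mul_le_mul harg h2 h1 (by positivity)
    _ = Real.pi / 2 := mul_one _

lemma denom_re_ge (α₀ τ₀ γ : ℝ) (hα : 0 < α₀) (hτ : 0 < τ₀) (hγ : 1 < γ ∧ γ ≤ 2)
    {z : ℂ} (hz : 0 ≤ z.im) :
    α₀ ≤ ((α₀ : ℂ) + (1 + (-Complex.I * (τ₀ : ℂ) * z) ^ ((γ : ℂ) - 1)) ^ ((1 : ℂ) / 2)).re := by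
  have hu := inner_re_nonneg τ₀ γ hτ hγ hz
  set u := (-Complex.I * (τ₀ : ℂ) * z) ^ ((γ : ℂ) - 1) with hudef
  have hre1 : 0 < (1 + u).re := by
    simp only [Complex.add_re, Complex.one_re]; linarith
  have hsq : 0 ≤ ((1 + u) ^ ((1 : ℂ) / 2)).re := by
    have hcast : ((1 : ℂ) / 2) = (((1 : ℝ) / 2 : ℝ) : ℂ) := by push_cast; ring
    rw [hcast]
    apply cpow_re_nonneg_of_abs_arg_le
    have harg : |arg (1 + u)| ≤ Real.pi / 2 :=
      Complex.abs_arg_le_pi_div_two_iff.mpr hre1.le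
    rw [abs_mul, _root_.abs_of_nonneg (by norm_num : (0:ℝ) ≤ 1/2)]
    nlinarith [harg, Real.pi_pos, abs_nonneg (arg (1 + u))]
  simp only [Complex.add_re, Complex.ofReal_re]
  linarith

/-- For `g(z) = √(1+(-i τ₀ z)^(γ-1)) / (α₀ + √(1+(-i τ₀ z)^(γ-1)))`, the
denominator has real part at least `α₀ > 0` on the closed upper half plane, so
`g` is well defined there, and `g` is holomorphic on the open upper half plane. -/
theorem stmt_7 (α₀ τ₀ γ : ℝ) (hα : 0 < α₀) (hτ : 0 < τ₀) (hγ : 1 < γ ∧ γ ≤ 2)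
    (g : ℂ → ℂ)
    (hg : ∀ z : ℂ, g z =
      (1 + (-Complex.I * (τ₀ : ℂ) * z) ^ ((γ : ℂ) - 1)) ^ ((1 : ℂ) / 2) /
        ((α₀ : ℂ) + (1 + (-Complex.I * (τ₀ : ℂ) * z) ^ ((γ : ℂ) - 1)) ^ ((1 : ℂ) / 2))) :
    (∀ z : ℂ, 0 ≤ z.im →
      α₀ ≤ ((α₀ : ℂ) + (1 + (-Complex.I * (τ₀ : ℂ) * z) ^ ((γ : ℂ) - 1)) ^ ((1 : ℂ) / 2)).re) ∧
    DifferentiableOn ℂ g {z : ℂ | 0 < z.im} := by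
  constructor
  · intro z hz
    exact denom_re_ge α₀ τ₀ γ hα hτ hγ hz
  · have heq : Set.EqOn g
        (fun z => (1 + (-Complex.I * (τ₀ : ℂ) * z) ^ ((γ : ℂ) - 1)) ^ ((1 : ℂ) / 2) /
          ((α₀ : ℂ) + (1 + (-Complex.I * (τ₀ : ℂ) * z) ^ ((γ : ℂ) - 1)) ^ ((1 : ℂ) / 2)))
        {z : ℂ | 0 < z.im} := fun z _ => hg z
    apply DifferentiableOn.congr _ heq
    intro z hz
    have hz' : 0 < z.im := hz
    -- inner power differentiable at z
    have hw : DifferentiableAt ℂ (fun z : ℂ => -Complex.I * (τ₀ : ℂ) * z) z := by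
      fun_prop
    have hwsl : (-Complex.I * (τ₀ : ℂ) * z) ∈ Complex.slitPlane := by
      left
      simp only [Complex.mul_re, Complex.mul_im, Complex.neg_re, Complex.neg_im,
        Complex.I_re, Complex.I_im, Complex.ofReal_re, Complex.ofReal_im]
      nlinarith
    have hinner : DifferentiableAt ℂ
        (fun z : ℂ => (-Complex.I * (τ₀ : ℂ) * z) ^ ((γ : ℂ) - 1)) z :=
      hw.cpow (differentiableAt_const _) hwsl
    have hre := inner_re_nonneg τ₀ γ hτ hγ hz'.le
    have h1sl : (1 + (-Complex.I * (τ₀ : ℂ) * z) ^ ((γ : ℂ) - 1)) ∈ Complex.slitPlane := by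
      left
      simp only [Complex.add_re, Complex.one_re]; linarith
    have hnum : DifferentiableAt ℂ
        (fun z : ℂ => (1 + (-Complex.I * (τ₀ : ℂ) * z) ^ ((γ : ℂ) - 1)) ^ ((1 : ℂ) / 2)) z :=
      ((differentiableAt_const _).add hinner).cpow (differentiableAt_const _) h1sl
    have hden : DifferentiableAt ℂ
        (fun z : ℂ => (α₀ : ℂ) +
          (1 + (-Complex.I * (τ₀ : ℂ) * z) ^ ((γ : ℂ) - 1)) ^ ((1 : ℂ) / 2)) z :=
      (differentiableAt_const _).add hnum
    have hne : (α₀ : ℂ) +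
        (1 + (-Complex.I * (τ₀ : ℂ) * z) ^ ((γ : ℂ) - 1)) ^ ((1 : ℂ) / 2) ≠ 0 := by
      intro h
      have := denom_re_ge α₀ τ₀ γ hα hτ hγ hz'.le (z := z)
      rw [h] at this
      simp at this
      linarith
    exact (hnum.div hden hne).differentiableWithinAt
end
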